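/- Let n ≥ 2 and let K : ℝⁿ → [0,+∞] be measurable, symmetric (K(−x)=K(x) a.e.), and satisfy ∫ min{1,|x|} K(x) dx < +∞. If A ⊂ B ⊂ ℝⁿ are two convex bodies (compact convex sets with non-empty interior), then P_K(A) ≤ P_K(B). -/

import Mathlib

open MeasureTheory Metric Set
open scoped ENNReal RealInnerProductSpace

open Classical in
/-- The non-local `K`-perimeter `P_K(E) = (1/2) ∬ |χ_E(x) - χ_E(y)| K(x-y) dx dy`. -/
noncomputable def PK {n : ℕ} (K : EuclideanSpace ℝ (Fin n) → ℝ≥0∞)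
    (E : Set (EuclideanSpace ℝ (Fin n))) : ℝ≥0∞ :=
  (1 / 2) * ∫⁻ x, ∫⁻ y, (if (x ∈ E) = (y ∈ E) then 0 else K (x - y))

/-!
Substituting `y = x - z` and exchanging the integrals gives
`P_K(E) = ½ ∫ K(z) |E ∆ (z + E)| dz = ½ ∫ K(z) (|E \ (z + E)| + |E \ (-z + E)|) dz`,
so it suffices that `|A \ (z + A)| ≤ |B \ (z + B)|` for every `z`. After a reflection taking
`z` to a multiple of the first basis vector, Fubini reduces this to lines parallel to `z`.
There `A` and `B` cut out bounded intervals `I ⊆ J`, and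
`|I \ (c + I)| = min (|I|, |c|) ≤ min (|J|, |c|) = |J \ (c + J)|`.
-/

open scoped Pointwise symmDiff

lemma Set.neg_vadd_set {α : Type*} [AddCommGroup α] (c : α) (s : Set α) :
    -(c +ᵥ s) = -c +ᵥ -s := by
  ext x
  simp only [mem_neg, mem_vadd_set_iff_neg_vadd_mem, vadd_eq_add, neg_neg, neg_add]

lemma measure_symmDiff_vadd_eq {G α : Type*} [AddGroup G] [AddAction G α] [MeasurableSpace α]
    [MeasurableConstVAdd G α] (μ : Measure α) [VAddInvariantMeasure G α μ] {s : Set α}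
    (hs : MeasurableSet s) (c : G) :
    μ (s ∆ (c +ᵥ s)) = μ (s \ (c +ᵥ s)) + μ (s \ (-c +ᵥ s)) := by
  rw [measure_symmDiff_eq hs.nullMeasurableSet (hs.const_vadd c).nullMeasurableSet,
    ← measure_neg_vadd_sdiff μ (-c), neg_neg]

section Interval

variable {s t : Set ℝ}

lemma Convex.volume_eq_ofReal_sSup_sub_sInf (hs : Convex ℝ s) (hb : Bornology.IsBounded s) :
    volume s = ENNReal.ofReal (sSup s - sInf s) := by
  rcases s.eq_empty_or_nonempty with rfl | hne
  · simp
  refine le_antisymm ?_ ?_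
  · rw [← Real.volume_Icc]
    exact measure_mono (subset_Icc_csInf_csSup hb.bddBelow hb.bddAbove)
  · rw [← Real.volume_Ioo]
    exact measure_mono ((hs.isConnected hne).Ioo_csInf_csSup_subset hb.bddBelow hb.bddAbove)

lemma Convex.volume_diff_vadd_of_nonneg (hs : Convex ℝ s) (hb : Bornology.IsBounded s)
    {c : ℝ} (hc : 0 ≤ c) : volume (s \ (c +ᵥ s)) = min (volume s) (ENNReal.ofReal c) := by
  rcases s.eq_empty_or_nonempty with rfl | hne
  · simp
  set a := sInf s
  set b := sSup s
  have hIoo : Ioo a b ⊆ s :=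
    (hs.isConnected hne).Ioo_csInf_csSup_subset hb.bddBelow hb.bddAbove
  have hupper : s \ (c +ᵥ s) ⊆ Icc a (min b (a + c)) := by
    rintro x ⟨hxs, hxc⟩
    refine ⟨csInf_le hb.bddBelow hxs, le_min (le_csSup hb.bddAbove hxs) ?_⟩
    by_contra! hx
    obtain ⟨u, hus, hu⟩ := exists_lt_of_csInf_lt hne (lt_sub_iff_add_lt.2 hx)
    refine hxc ⟨x - c, hs.ordConnected.out hus hxs ⟨hu.le, by linarith⟩, ?_⟩
    simp
  have hlower : Ioo a (min b (a + c)) ⊆ s \ (c +ᵥ s) := by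
    rintro x ⟨hax, hxbc⟩
    refine ⟨hIoo ⟨hax, hxbc.trans_le (min_le_left _ _)⟩, ?_⟩
    rintro ⟨y, hys, rfl⟩
    have hay : a ≤ y := csInf_le hb.bddBelow hys
    have hyc : c + y < a + c := hxbc.trans_le (min_le_right _ _)
    linarith
  have hlength : ENNReal.ofReal (min b (a + c) - a) = min (volume s) (ENNReal.ofReal c) := by
    rw [hs.volume_eq_ofReal_sSup_sub_sInf hb, ← ENNReal.ofReal_min, ← min_sub_sub_right,
      add_sub_cancel_left]
  apply le_antisymm
  · calc volume (s \ (c +ᵥ s)) ≤ volume (Icc a (min b (a + c))) := measure_mono hupper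
      _ = _ := by rw [Real.volume_Icc, hlength]
  · calc _ = volume (Ioo a (min b (a + c))) := by rw [Real.volume_Ioo, hlength]
      _ ≤ _ := measure_mono hlower

lemma Convex.volume_diff_vadd (hs : Convex ℝ s) (hb : Bornology.IsBounded s) (c : ℝ) :
    volume (s \ (c +ᵥ s)) = min (volume s) (ENNReal.ofReal |c|) := by
  rcases le_total 0 c with hc | hc
  · rw [abs_of_nonneg hc, hs.volume_diff_vadd_of_nonneg hb hc]
  · have hneg : s \ (c +ᵥ s) = -(-s \ (-c +ᵥ -s)) := by
      rw [← Set.neg_vadd_set]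
      exact (neg_neg (s \ (c +ᵥ s))).symm
    rw [hneg, Measure.measure_neg, hs.neg.volume_diff_vadd_of_nonneg hb.neg (neg_nonneg.2 hc),
      Measure.measure_neg, abs_of_nonpos hc]

lemma Convex.volume_diff_vadd_mono (hs : Convex ℝ s) (ht : Convex ℝ t) (hst : s ⊆ t)
    (htb : Bornology.IsBounded t) (c : ℝ) :
    volume (s \ (c +ᵥ s)) ≤ volume (t \ (c +ᵥ t)) := by
  rw [hs.volume_diff_vadd (htb.subset hst), ht.volume_diff_vadd htb]
  gcongr

end Interval

def lineSlice {E : Type*} [AddCommGroup E] [Module ℝ E] (S : Set E) (p u : E) : Set ℝ :=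
  {t | p + t • u ∈ S}

section LineSlice

variable {E : Type*} [AddCommGroup E] [Module ℝ E] {S T : Set E} {p u : E}

lemma Convex.lineSlice (hS : Convex ℝ S) : Convex ℝ (lineSlice S p u) :=
  hS.affine_preimage (AffineMap.const ℝ ℝ p + (LinearMap.toSpanSingleton ℝ E u).toAffineMap)

lemma lineSlice_diff : lineSlice (S \ T) p u = lineSlice S p u \ lineSlice T p u := rfl

lemma lineSlice_smul_vadd (c : ℝ) : lineSlice ((c • u) +ᵥ S) p u = c +ᵥ lineSlice S p u := by
  ext t
  simp only [lineSlice, mem_vadd_set_iff_neg_vadd_mem, mem_ofPred_eq, vadd_eq_add]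
  rw [add_smul, neg_smul, add_left_comm]

lemma Bornology.IsBounded.lineSlice {F : Type*} [NormedAddCommGroup F] [NormedSpace ℝ F]
    {S : Set F} (hS : Bornology.IsBounded S) (p : F) {u : F} (hu : u ≠ 0) :
    Bornology.IsBounded (lineSlice S p u) := by
  have hanti : AntilipschitzWith ‖u‖₊⁻¹ fun t : ℝ => p + t • u := by
    refine AntilipschitzWith.of_le_mul_dist fun s t => ?_
    rw [dist_add_left, dist_eq_norm (s • u), ← sub_smul, norm_smul, NNReal.coe_inv, coe_nnnorm,
      mul_comm, mul_inv_cancel_right₀ (norm_ne_zero_iff.2 hu), dist_eq_norm]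
  exact hanti.isBounded_preimage hS

end LineSlice

namespace EuclideanSpace

variable {m : ℕ}

lemma volume_eq_lintegral_volume_lineSlice {S : Set (EuclideanSpace ℝ (Fin (m + 1)))}
    (hS : MeasurableSet S) :
    volume S = ∫⁻ w : Fin m → ℝ,
      volume (lineSlice S (WithLp.toLp 2 (Fin.cons 0 w)) (EuclideanSpace.single 0 1)) := by
  let Φ := (MeasurableEquiv.piFinSuccAbove (fun _ : Fin (m + 1) => ℝ) 0).symm.trans
    (MeasurableEquiv.toLp 2 (Fin (m + 1) → ℝ))
  have hΦ : MeasurePreserving Φ volume volume :=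
    ((volume_preserving_symm_measurableEquiv_toLp _).symm _).comp
      ((volume_preserving_piFinSuccAbove (fun _ : Fin (m + 1) => ℝ) 0).symm _)
  have hline : ∀ t w, Φ (t, w) = WithLp.toLp 2 (Fin.cons 0 w) + t • EuclideanSpace.single 0 1 := by
    intro t w
    ext i
    cases i using Fin.cases <;> simp [Φ, MeasurableEquiv.piFinSuccAbove]
  rw [← hΦ.measure_preimage_equiv, Measure.volume_eq_prod,
    Measure.prod_apply_symm (hS.preimage Φ.measurable)]
  simp only [lineSlice, preimage, hline]
  rfl

lemma volume_diff_smul_single_vadd_mono {A B : Set (EuclideanSpace ℝ (Fin (m + 1)))}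
    (hA : Convex ℝ A) (hAm : MeasurableSet A) (hB : Convex ℝ B) (hBb : Bornology.IsBounded B)
    (hBm : MeasurableSet B) (hAB : A ⊆ B) (c : ℝ) :
    volume (A \ ((c • EuclideanSpace.single (0 : Fin (m + 1)) (1 : ℝ)) +ᵥ A)) ≤
      volume (B \ ((c • EuclideanSpace.single (0 : Fin (m + 1)) (1 : ℝ)) +ᵥ B)) := by
  rw [volume_eq_lintegral_volume_lineSlice (hAm.diff (hAm.const_vadd _)),
    volume_eq_lintegral_volume_lineSlice (hBm.diff (hBm.const_vadd _))]
  refine lintegral_mono fun w => ?_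
  rw [lineSlice_diff, lineSlice_diff, lineSlice_smul_vadd, lineSlice_smul_vadd]
  exact hA.lineSlice.volume_diff_vadd_mono hB.lineSlice (preimage_mono hAB)
    (hBb.lineSlice _ (by simp)) c

end EuclideanSpace

lemma LinearIsometryEquiv.volume_preimage_diff_vadd {E F : Type*} [NormedAddCommGroup E]
    [InnerProductSpace ℝ E] [FiniteDimensional ℝ E] [MeasurableSpace E] [BorelSpace E]
    [NormedAddCommGroup F] [InnerProductSpace ℝ F] [FiniteDimensional ℝ F] [MeasurableSpace F]
    [BorelSpace F] (ρ : E ≃ₗᵢ[ℝ] F) (S : Set F) (v : E) :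
    volume (ρ ⁻¹' S \ (v +ᵥ ρ ⁻¹' S)) = volume (S \ (ρ v +ᵥ S)) := by
  have hvadd : ρ ⁻¹' (ρ v +ᵥ S) = v +ᵥ ρ ⁻¹' S := by
    ext x
    simp [mem_vadd_set_iff_neg_vadd_mem]
  rw [← hvadd, ← preimage_sdiff]
  exact ρ.measurePreserving.measure_preimage_emb ρ.toHomeomorph.measurableEmbedding _

lemma EuclideanSpace.volume_diff_vadd_mono {n : ℕ} {A B : Set (EuclideanSpace ℝ (Fin n))}
    (hA : Convex ℝ A) (hAm : MeasurableSet A) (hB : Convex ℝ B) (hBb : Bornology.IsBounded B)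
    (hBm : MeasurableSet B) (hAB : A ⊆ B) (z : EuclideanSpace ℝ (Fin n)) :
    volume (A \ (z +ᵥ A)) ≤ volume (B \ (z +ᵥ B)) := by
  cases n with
  | zero => simp [Subsingleton.elim z 0]
  | succ m =>
    set v : EuclideanSpace ℝ (Fin (m + 1)) := ‖z‖ • EuclideanSpace.single 0 1
    have hv : ‖v‖ = ‖z‖ := by
      rw [norm_smul, PiLp.norm_single, norm_one, mul_one, norm_norm]
    set ρ := Submodule.reflection (ℝ ∙ (v - z))ᗮ
    have hρ : ρ v = z := Submodule.reflection_sub hv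
    rw [← hρ, ← ρ.volume_preimage_diff_vadd, ← ρ.volume_preimage_diff_vadd]
    exact volume_diff_smul_single_vadd_mono (hA.linear_preimage ρ.toLinearEquiv.toLinearMap)
      (hAm.preimage ρ.continuous.measurable) (hB.linear_preimage ρ.toLinearEquiv.toLinearMap)
      (ρ.isometry.antilipschitz.isBounded_preimage hBb) (hBm.preimage ρ.continuous.measurable)
      (preimage_mono hAB) ‖z‖

lemma PK_eq_lintegral_volume_symmDiff {n : ℕ} {K : EuclideanSpace ℝ (Fin n) → ℝ≥0∞}
    (hK : Measurable K) {E : Set (EuclideanSpace ℝ (Fin n))} (hE : MeasurableSet E) :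
    PK K E = 1 / 2 * ∫⁻ z, K z * volume (E ∆ (z +ᵥ E)) := by
  classical
  rw [PK]
  congr 1
  have hmem : ∀ x z : EuclideanSpace ℝ (Fin n), x ∈ z +ᵥ E ↔ x - z ∈ E := by
    simp [mem_vadd_set_iff_neg_vadd_mem, neg_add_eq_sub]
  have hsub : ∀ x, ∫⁻ y, (if (x ∈ E) = (y ∈ E) then 0 else K (x - y)) =
      ∫⁻ z, if (x ∈ E) = (x - z ∈ E) then 0 else K z := fun x => by
    simpa only [sub_sub_cancel] using
      lintegral_sub_left_eq_self (fun z => if (x ∈ E) = (x - z ∈ E) then 0 else K z) x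
  have hmeas : Measurable (Function.uncurry fun x z : EuclideanSpace ℝ (Fin n) =>
      if (x ∈ E) = (x - z ∈ E) then 0 else K z) :=
    Measurable.ite (measurableSet_eq_fun (hE.mem.comp measurable_fst)
      (hE.mem.comp (measurable_fst.sub measurable_snd))) measurable_const (hK.comp measurable_snd)
  simp_rw [hsub]
  rw [lintegral_lintegral_swap hmeas.aemeasurable]
  congr 1 with z
  rw [← lintegral_indicator_const (hE.symmDiff (hE.const_vadd z))]
  congr 1 with x
  simp only [indicator, mem_symmDiff, hmem, eq_iff_iff]
  split_ifs <;> tauto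

theorem stmt3_general (n : ℕ) (K : EuclideanSpace ℝ (Fin n) → ℝ≥0∞)
    (hKmeas : Measurable K)
    (A B : Set (EuclideanSpace ℝ (Fin n)))
    (hAcomp : IsCompact A) (hAconv : Convex ℝ A)
    (hBcomp : IsCompact B) (hBconv : Convex ℝ B)
    (hAB : A ⊆ B) :
    PK K A ≤ PK K B := by
  have hAm := hAcomp.measurableSet
  have hBm := hBcomp.measurableSet
  rw [PK_eq_lintegral_volume_symmDiff hKmeas hAm, PK_eq_lintegral_volume_symmDiff hKmeas hBm]
  gcongr _ * ∫⁻ z, _ * ?_ with z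
  rw [measure_symmDiff_vadd_eq volume hAm, measure_symmDiff_vadd_eq volume hBm]
  have hmono := EuclideanSpace.volume_diff_vadd_mono hAconv hAm hBconv hBcomp.isBounded hBm hAB
  exact add_le_add (hmono z) (hmono (-z))

/-- Monotonicity of the non-local `K`-perimeter on nested convex bodies. -/
theorem stmt3 (n : ℕ) (hn : 2 ≤ n) (K : EuclideanSpace ℝ (Fin n) → ℝ≥0∞)
    (hKmeas : Measurable K)
    (hKsym : ∀ᵐ x : EuclideanSpace ℝ (Fin n), K (-x) = K x)
    (hKint : (∫⁻ x : EuclideanSpace ℝ (Fin n), min 1 (ENNReal.ofReal ‖x‖) * K x) < ⊤)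
    (A B : Set (EuclideanSpace ℝ (Fin n)))
    (hAcomp : IsCompact A) (hAconv : Convex ℝ A) (hAint : (interior A).Nonempty)
    (hBcomp : IsCompact B) (hBconv : Convex ℝ B) (hBint : (interior B).Nonempty)
    (hAB : A ⊆ B) :
    PK K A ≤ PK K B :=
  stmt3_general n K hKmeas A B hAcomp hAconv hBcomp hBconv hAB
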